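/- Let X and Y be real Banach spaces and A : X → Y a weakly compact bounded linear operator. Let x** ∈ X** and let V be a neighborhood of x** in the w*-topology σ(X**, X*). Then for every ε > 0 there exists x ∈ X whose canonical image j_X(x) lies in V, such that ‖x‖ ≤ ‖x**‖ and ‖j_Y(Ax) − A** x**‖ < ε (norm in Y**). -/

import Mathlib

open Filter Topology Pointwise NormedSpace

noncomputable section

variable {X Y : Type*} [NormedAddCommGroup X] [NormedSpace ℝ X] [CompleteSpace X]
  [NormedAddCommGroup Y] [NormedSpace ℝ Y] [CompleteSpace Y]

/-- The adjoint `A* : Y* → X*` of a bounded linear operator, `(A* g)(x) = g (A x)`. -/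
def opAdjoint (A : X →L[ℝ] Y) : StrongDual ℝ Y →L[ℝ] StrongDual ℝ X :=
  (ContinuousLinearMap.compSL X Y ℝ (RingHom.id ℝ) (RingHom.id ℝ)).flip A

/-- An operator is weakly compact if the image of the closed unit ball is
relatively compact in the weak topology of the codomain. -/
def IsWeaklyCompactOp (A : X →L[ℝ] Y) : Prop :=
  IsCompact (closure (toWeakSpace ℝ Y '' (A '' Metric.closedBall 0 1)))

/-!
Shrink `V` to a convex w*-neighbourhood `U` of `x**` and put
`S = {x : ‖x‖ ≤ ‖x**‖, j_X x ∈ U}`, a convex set. By Goldstine, `x**` lies in the w*-closure of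
`j_X(S)`, so by w*-continuity of `A**` the point `A** x**` lies in the w*-closure of `j_Y(A S)`.
As `A` is weakly compact, the weak closure `K` of `A(S)` is weakly compact, and the weak-to-w*
continuous map `j_Y` sends it to a w*-compact, hence w*-closed, set. So `A** x** = j_Y y` for some
`y ∈ K`, and `K` is the norm closure of `A(S)` by Mazur's theorem; any `x ∈ S` with `A x` close
to `y` will do.
-/

open Metric Set

section Bidual

variable {E F : Type*} [NormedAddCommGroup E] [NormedSpace ℝ E] [NormedAddCommGroup F]
  [NormedSpace ℝ F]

instance WeakDual.instLocallyConvexSpace : LocallyConvexSpace ℝ (WeakDual ℝ E) :=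
  WeakBilin.locallyConvexSpace

theorem StrongDual.mul_norm_le_of_forall_apply_le {g : StrongDual ℝ E} {r u : ℝ} (hr : 0 ≤ r)
    (h : ∀ x ∈ closedBall (0 : E) r, g x ≤ u) : r * ‖g‖ ≤ u := by
  have habs : ∀ x ∈ closedBall (0 : E) r, ‖g x‖ ≤ u := fun x hx =>
    abs_le.2 ⟨neg_le.1 (by simpa using h (-x) (by simpa using hx)), h x hx⟩
  rcases hr.eq_or_lt with rfl | hr
  · simpa using habs 0 (by simp)
  · rw [mul_comm, ← le_div_iff₀ hr]
    exact g.opNorm_bound_of_ball_bound hr u habs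

/-- **Goldstine's theorem**. -/
theorem toWeakDual_mem_closure_image_closedBall (z : StrongDual ℝ (StrongDual ℝ E)) {r : ℝ}
    (hz : ‖z‖ ≤ r) :
    StrongDual.toWeakDual z ∈
      closure (StrongDual.toWeakDual ∘ inclusionInDoubleDual ℝ E '' closedBall 0 r) := by
  by_contra hzC
  have hconv := ((convex_closedBall (0 : E) r).linear_image
      (StrongDual.toWeakDual.toLinearMap ∘ₗ (inclusionInDoubleDual ℝ E).toLinearMap)).closure
  obtain ⟨f, u, hf, hfz⟩ := geometric_hahn_banach_closed_point hconv isClosed_closure hzC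
  -- a w*-continuous functional on the bidual is evaluation at some `g : E*`
  obtain ⟨g, rfl⟩ := LinearMap.dualEmbedding_surjective _ f
  have hg : r * ‖g‖ ≤ u := StrongDual.mul_norm_le_of_forall_apply_le ((norm_nonneg z).trans hz)
    fun x hx => (hf _ (subset_closure ⟨x, hx, rfl⟩)).le
  have hzg : z g ≤ r * ‖g‖ := (le_abs_self _).trans ((z.le_opNorm g).trans (by gcongr))
  exact hfz.not_ge (hzg.trans hg)

theorem WeakDual.continuous_toWeakDual_comp (T : F →L[ℝ] E) :
    Continuous fun w : WeakDual ℝ E => StrongDual.toWeakDual ((WeakDual.toStrongDual w).comp T) :=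
  WeakDual.continuous_of_continuous_eval fun y => WeakDual.eval_continuous (T y)

theorem closure_image_inclusionInDoubleDual_subset {s : Set E} (hs : Convex ℝ s)
    (hsc : IsCompact (closure (toWeakSpace ℝ E '' s))) :
    closure (StrongDual.toWeakDual ∘ inclusionInDoubleDual ℝ E '' s) ⊆
      StrongDual.toWeakDual ∘ inclusionInDoubleDual ℝ E '' closure s := by
  have hK := hsc.image (inclusionInDoubleDualWeak ℝ E).continuous
  rw [← hs.toWeakSpace_closure ℝ, image_image] at hK
  exact closure_minimal (image_mono subset_closure) hK.isClosed

theorem IsWeaklyCompactOp.isCompact_closure_image_closedBall {A : E →L[ℝ] F}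
    (hA : IsWeaklyCompactOp A) {r : ℝ} (hr : 0 ≤ r) :
    IsCompact (closure (toWeakSpace ℝ F '' (A '' closedBall 0 r))) := by
  have := hA.smul r
  rwa [← closure_smul₀, ← image_smul_set, ← image_smul_set,
    smul_unitClosedBall_of_nonneg hr] at this

end Bidual

/-- Proposition 5.1 of the paper: if `A` is weakly compact,
`x** ∈ X**` and `V` is a `σ(X**, X*)`-neighborhood of `x**`, then for every `ε > 0`
there is `x ∈ X` with `j_X x ∈ V`, `‖x‖ ≤ ‖x**‖` and `‖j_Y (A x) − A** x**‖ < ε`. -/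
theorem statement1 (A : X →L[ℝ] Y) (hA : IsWeaklyCompactOp A)
    (xss : StrongDual ℝ (StrongDual ℝ X)) (V : Set (StrongDual ℝ (StrongDual ℝ X)))
    (hV : StrongDual.toWeakDual '' V ∈ 𝓝 (StrongDual.toWeakDual xss)) :
    ∀ ε : ℝ, 0 < ε → ∃ x : X, inclusionInDoubleDual ℝ X x ∈ V ∧ ‖x‖ ≤ ‖xss‖ ∧
      ‖inclusionInDoubleDual ℝ Y (A x) - xss.comp (opAdjoint A)‖ < ε := by
  intro ε hε
  obtain ⟨U, ⟨hU, hUconv⟩, hUV⟩ := (LocallyConvexSpace.convex_basis (𝕜 := ℝ) _).mem_iff.1 hV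
  set jX := StrongDual.toWeakDual ∘ inclusionInDoubleDual ℝ X
  set jY := StrongDual.toWeakDual ∘ inclusionInDoubleDual ℝ Y
  set S := closedBall (0 : X) ‖xss‖ ∩ jX ⁻¹' U
  have hS : Convex ℝ (A '' S) := ((convex_closedBall _ _).inter
    (hUconv.linear_preimage (StrongDual.toWeakDual.toLinearMap ∘ₗ
      (inclusionInDoubleDual ℝ X).toLinearMap))).linear_image A.toLinearMap
  have hSc : IsCompact (closure (toWeakSpace ℝ Y '' (A '' S))) :=
    (hA.isCompact_closure_image_closedBall (norm_nonneg xss)).of_isClosed_subset isClosed_closure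
      (closure_mono (image_mono (image_mono inter_subset_left)))
  have hxS : StrongDual.toWeakDual xss ∈ closure (jX '' S) := by
    rw [image_inter_preimage]
    refine mem_closure_iff_nhds.2 fun t ht => ?_
    exact (mem_closure_iff_nhds.1 (toWeakDual_mem_closure_image_closedBall xss le_rfl) _
      (inter_mem ht hU)).mono fun _ h => ⟨h.1.1, h.2, h.1.2⟩
  have hAxS : StrongDual.toWeakDual (xss.comp (opAdjoint A)) ∈ closure (jY '' (A '' S)) := by
    refine map_mem_closure
      (f := fun w => StrongDual.toWeakDual ((WeakDual.toStrongDual w).comp (opAdjoint A)))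
      (WeakDual.continuous_toWeakDual_comp (opAdjoint A)) hxS ?_
    rintro _ ⟨x, hx, rfl⟩
    exact ⟨A x, mem_image_of_mem A hx, rfl⟩
  obtain ⟨y, hy, hjy⟩ := closure_image_inclusionInDoubleDual_subset hS hSc hAxS
  obtain ⟨_, ⟨x, hx, rfl⟩, hxy⟩ := Metric.mem_closure_iff.1 hy ε hε
  refine ⟨x, ?_, mem_closedBall_zero_iff.1 hx.1, ?_⟩
  · obtain ⟨v, hv, hvx⟩ := hUV hx.2
    rwa [← StrongDual.toWeakDual.injective hvx]
  · rw [← StrongDual.toWeakDual.injective hjy, ← map_sub]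
    exact (double_dual_bound ℝ Y _).trans_lt (by rwa [← dist_eq_norm, dist_comm])
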